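/- arXiv:1302.6560 — 4 statements merged into one kernel-verified Lean document; each statement's English description precedes it below -/
import Mathlib

section
/- Let A ∈ Mat_{n×m}(ℝ), B ∈ Mat_{n×n}(ℝ), and Y ∈ Mat_{m×n}(ℝ). Let u_Y = [[I_m, Y],[0, I_n]] ∈ Mat_{(m+n)×(m+n)}(ℝ), and let W_{A,B} ⊆ ℝ^{m+n} be the column span of the transpose (A|B)^t. Then det(AY + B) = 0 if and only if the orthogonal projection of u_Y^t W_{A,B} onto the span of the last n standard basis vectors has dimension strictly less than n. -/
/-!
As matrices, `proj * u_Yᵀ * (A|B)ᵀ = (0; I_n) * (A Y + B)ᵀ`, and `(0; I_n)` has the left inverse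
`(0 | I_n)`. So the projected subspace has dimension `rank (A Y + B)`, which is `< n` exactly
when the square matrix `A Y + B` is singular.
-/

open Matrix

namespace Matrix

variable {R K l m n : Type*}

theorem rank_mul_eq_right_of_mul_eq_one [CommSemiring R] [StrongRankCondition R]
    [Fintype l] [Fintype m] [Fintype n] [DecidableEq m]
    {P : Matrix l m R} {Q : Matrix m l R} (hQP : Q * P = 1) (X : Matrix m n R) :
    (P * X).rank = X.rank :=
  le_antisymm (rank_mul_le_right P X) <| calc
    X.rank = (Q * (P * X)).rank := by rw [← Matrix.mul_assoc, hQP, Matrix.one_mul]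
    _ ≤ (P * X).rank := rank_mul_le_right Q (P * X)

theorem det_eq_zero_iff_rank_lt_card [Field K] [Fintype n] [DecidableEq n] (M : Matrix n n K) :
    M.det = 0 ↔ M.rank < Fintype.card n := by
  rw [← not_iff_not, ← Ne, ← isUnit_iff_ne_zero, ← isUnit_iff_isUnit_det,
    ← mulVec_surjective_iff_isUnit, not_lt, (rank_le_card_width M).ge_iff_eq, rank,
    ← Module.finrank_fintype_fun_eq_card K, ← Submodule.eq_top_iff_finrank_eq,
    LinearMap.range_eq_top]
  rfl

theorem fromBlocks_zero_one_mul_transpose_mul_transpose_fromCols [CommSemiring R]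
    [Fintype m] [Fintype n] [DecidableEq m] [DecidableEq n]
    (A : Matrix n m R) (B : Matrix n n R) (Y : Matrix m n R) :
    fromBlocks (0 : Matrix m m R) (0 : Matrix m n R) (0 : Matrix n m R) (1 : Matrix n n R) *
        (fromBlocks (1 : Matrix m m R) Y (0 : Matrix n m R) (1 : Matrix n n R))ᵀ *
        (fromCols A B)ᵀ =
      fromRows (0 : Matrix m n R) (1 : Matrix n n R) * (A * Y + B)ᵀ := by
  rw [fromBlocks_transpose, transpose_fromCols, fromBlocks_multiply, fromBlocks_mul_fromRows,
    fromRows_mul]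
  simp [transpose_add, transpose_mul]

end Matrix

theorem stmt_5 (m n : ℕ) (A : Matrix (Fin n) (Fin m) ℝ) (B : Matrix (Fin n) (Fin n) ℝ)
    (Y : Matrix (Fin m) (Fin n) ℝ) :
    let uY : Matrix (Fin m ⊕ Fin n) (Fin m ⊕ Fin n) ℝ :=
      Matrix.fromBlocks 1 Y 0 1
    let W : Submodule ℝ ((Fin m ⊕ Fin n) → ℝ) :=
      LinearMap.range ((Matrix.fromCols A B)ᵀ.mulVecLin)
    -- orthogonal projection onto the span of the last n standard basis vectors,
    -- given by zeroing out the first m coordinates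
    let proj : ((Fin m ⊕ Fin n) → ℝ) →ₗ[ℝ] ((Fin m ⊕ Fin n) → ℝ) :=
      (Matrix.fromBlocks (0 : Matrix (Fin m) (Fin m) ℝ) 0 0
        (1 : Matrix (Fin n) (Fin n) ℝ)).mulVecLin
    ((A * Y + B).det = 0 ↔
      Module.finrank ℝ (Submodule.map proj (Submodule.map (uYᵀ.mulVecLin) W)) < n) := by
  intro uY W proj
  have hQP : fromCols (0 : Matrix (Fin n) (Fin m) ℝ) (1 : Matrix (Fin n) (Fin n) ℝ) *
      fromRows (0 : Matrix (Fin m) (Fin n) ℝ) (1 : Matrix (Fin n) (Fin n) ℝ) = 1 := by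
    simp [fromCols_mul_fromRows]
  have hrank : Module.finrank ℝ (Submodule.map proj (Submodule.map (uYᵀ.mulVecLin) W)) =
      (fromRows (0 : Matrix (Fin m) (Fin n) ℝ) (1 : Matrix (Fin n) (Fin n) ℝ) *
        (A * Y + B)ᵀ).rank := by
    rw [← fromBlocks_zero_one_mul_transpose_mul_transpose_fromCols, rank, mulVecLin_mul,
      mulVecLin_mul, LinearMap.range_comp, Submodule.map_comp]
  rw [hrank, rank_mul_eq_right_of_mul_eq_one hQP, rank_transpose, det_eq_zero_iff_rank_lt_card,
    Fintype.card_fin]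
end

section
/- Let A ∈ Mat_{n×m}(ℝ), B ∈ Mat_{n×n}(ℝ) with rank(A|B) = n, Y ∈ Mat_{m×n}(ℝ), and u_Y = [[I_m, Y],[0, I_n]]. Let W_{A,B} ⊆ ℝ^{m+n} be the column span of (A|B)^t. Then det(AY + B) = 0 if and only if (u_Y^t W_{A,B}) ∩ E_m^+ ≠ {0}, where E_m^+ is the span of the first m standard basis vectors. -/
/-!
Since `u_Y` is unipotent, `(A|B) u_Y = (A | AY + B)` still has rank `n`, so
`x ↦ u_Yᵀ (A|B)ᵀ x = (Aᵀ x, (AY + B)ᵀ x)` is injective and parametrises `u_Yᵀ W_{A,B}`.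
Such a vector lies in `E_m^+` iff `(AY + B)ᵀ x = 0`, and it is nonzero iff `x` is, so the
intersection is nontrivial iff `(AY + B)ᵀ` has a nontrivial kernel, i.e. `det (AY + B) = 0`.
-/

open Matrix

namespace Matrix

theorem fromCols_mul_fromBlocks_one_zero_one {R : Type*} [Semiring R] {ι κ κ' : Type*}
    [Fintype κ] [Fintype κ'] [DecidableEq κ] [DecidableEq κ']
    (A : Matrix ι κ R) (B : Matrix ι κ' R) (Y : Matrix κ κ' R) :
    fromCols A B * (fromBlocks 1 Y 0 1 : Matrix (κ ⊕ κ') (κ ⊕ κ') R) =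
      fromCols A (A * Y + B) := by
  simp [fromCols_mul_fromBlocks]

variable {K : Type*} [Field K] {ι ι' κ : Type*} [Fintype κ]

theorem mulVec_injective_of_rank_eq_card (M : Matrix ι κ K) (h : M.rank = Fintype.card κ) :
    Function.Injective M.mulVec := by
  have hker := LinearMap.finrank_range_add_finrank_ker M.mulVecLin
  rw [← Matrix.rank, h, Module.finrank_fintype_fun_eq_card, Nat.add_eq_left,
    Submodule.finrank_eq_zero] at hker
  exact LinearMap.ker_eq_bot.mp hker

theorem range_mulVecLin_fromRows_inf_span_inl_ne_bot_iff [DecidableEq ι] [DecidableEq ι']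
    [Finite ι] (P : Matrix ι κ K) (Q : Matrix ι' κ K)
    (h : Function.Injective (fromRows P Q).mulVec) :
    LinearMap.range (fromRows P Q).mulVecLin ⊓
        Submodule.span K (Set.range fun i : ι => Pi.single (Sum.inl i : ι ⊕ ι') (1 : K)) ≠ ⊥ ↔
      ∃ x ≠ 0, Q *ᵥ x = 0 := by
  simp only [Submodule.ne_bot_iff, Submodule.mem_inf, LinearMap.mem_range,
    Pi.mem_span_range_single_inl_iff]
  constructor
  · rintro ⟨_, ⟨⟨x, rfl⟩, hQx⟩, hx⟩
    refine ⟨x, ?_, funext fun k => by simpa [fromRows_mulVec] using hQx k⟩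
    rintro rfl
    simp at hx
  · rintro ⟨x, hx, hQx⟩
    exact ⟨_, ⟨⟨x, rfl⟩, fun k => by simp [fromRows_mulVec, hQx]⟩,
      (h.ne_iff' (mulVec_zero _)).mpr hx⟩

end Matrix

theorem stmt_6 (m n : ℕ) (A : Matrix (Fin n) (Fin m) ℝ) (B : Matrix (Fin n) (Fin n) ℝ)
    (hrank : (Matrix.fromCols A B).rank = n)
    (Y : Matrix (Fin m) (Fin n) ℝ) :
    let uY : Matrix (Fin m ⊕ Fin n) (Fin m ⊕ Fin n) ℝ :=
      Matrix.fromBlocks 1 Y 0 1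
    let W : Submodule ℝ ((Fin m ⊕ Fin n) → ℝ) :=
      LinearMap.range ((Matrix.fromCols A B)ᵀ.mulVecLin)
    let EmPlus : Submodule ℝ ((Fin m ⊕ Fin n) → ℝ) :=
      Submodule.span ℝ (Set.range fun i : Fin m =>
        (Pi.single (Sum.inl i : Fin m ⊕ Fin n) (1 : ℝ)))
    ((A * Y + B).det = 0 ↔ (Submodule.map (uYᵀ.mulVecLin) W) ⊓ EmPlus ≠ ⊥) := by
  intro uY W EmPlus
  have hprod : fromCols A B * uY = fromCols A (A * Y + B) :=
    fromCols_mul_fromBlocks_one_zero_one A B Y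
  have hdet : IsUnit uY.det := by simp [uY]
  have hW : Submodule.map uYᵀ.mulVecLin W =
      LinearMap.range (fromRows Aᵀ (A * Y + B)ᵀ).mulVecLin := by
    rw [← LinearMap.range_comp, ← mulVecLin_mul, ← transpose_mul, hprod, transpose_fromCols]
  have hinj : Function.Injective (fromRows Aᵀ (A * Y + B)ᵀ).mulVec := by
    apply mulVec_injective_of_rank_eq_card
    rw [← transpose_fromCols, rank_transpose, ← hprod, rank_mul_eq_left_of_isUnit_det _ _ hdet,
      hrank, Fintype.card_fin]
  rw [hW, range_mulVecLin_fromRows_inf_span_inl_ne_bot_iff _ _ hinj, ← det_transpose,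
    exists_mulVec_eq_zero_iff]
end

section
/- Let A ∈ Mat_{n×m}(ℝ), B ∈ Mat_{n×n}(ℝ) with rank(A|B) = n, and Y ∈ Mat_{m×n}(ℝ). Suppose C ∈ Mat_{m×m}(ℝ) and D ∈ Mat_{m×n}(ℝ) are such that the columns of (C|D)^t form a basis for the orthogonal complement in ℝ^{m+n} of W_{A,B}, the column span of (A|B)^t. Then det(AY + B) = 0 if and only if det(D Y^t − C) = 0. -/
/-!
Write `M = (A|B)` and `N = (C|D)`. The row space of `N` is the orthogonal complement of the
range of `Mᵀ`, so taking complements once more gives `ker N = range Mᵀ`. Both determinants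
vanish exactly when this subspace contains a nonzero vector of the form `(-x, Yᵀx)`: for `N`
because `N (-x, Yᵀx) = (DYᵀ - C) x`, and for `M` because `(AY + B)ᵀ v = 0` says precisely
that `Mᵀ v = (Aᵀv, Bᵀv)` has this form with `x = -Aᵀv`, where `x ≠ 0` as `Mᵀ` is
injective (`rank M = n`).
-/

open Matrix

variable {K : Type*} [Field K]

namespace Matrix

theorem dotProductBilin_nondegenerate {ι : Type*} [Fintype ι] :
    (dotProductBilin K K : LinearMap.BilinForm K (ι → K)).Nondegenerate := by
  classical
  refine ⟨fun x hx => funext fun i => ?_, fun y hy => funext fun i => ?_⟩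
  · simpa using hx (Pi.single i 1)
  · simpa using hy (Pi.single i 1)

theorem dotProductBilin_isRefl {ι : Type*} [Fintype ι] :
    (dotProductBilin K K : LinearMap.BilinForm K (ι → K)).IsRefl := fun x y h => by
  simpa [dotProduct_comm] using h

theorem ker_mulVecLin_eq_of_span_row_eq {ι κ : Type*} [Fintype ι]
    {N : Matrix κ ι K} {W : Submodule K (ι → K)}
    (h : (Submodule.span K (Set.range N.row) : Set (ι → K)) = {v | ∀ w ∈ W, v ⬝ᵥ w = 0}) :
    LinearMap.ker N.mulVecLin = W := by
  set B : LinearMap.BilinForm K (ι → K) := dotProductBilin K K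
  have hspan : Submodule.span K (Set.range N.row) = B.orthogonal W := by
    ext v
    rw [← SetLike.mem_coe, h]
    simp [B, dotProduct_comm]
  have hker : LinearMap.ker N.mulVecLin = B.orthogonal (Submodule.span K (Set.range N.row)) := by
    ext v
    change N *ᵥ v = 0 ↔ Submodule.span K (Set.range N.row) ≤ LinearMap.ker (B.flip v)
    rw [Submodule.span_le, Set.range_subset_iff, funext_iff]
    rfl
  rw [hker, hspan, B.orthogonal_orthogonal dotProductBilin_nondegenerate dotProductBilin_isRefl]

theorem ker_mulVecLin_eq_bot_of_rank_eq_card {m n : Type*} [Fintype m] [Fintype n]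
    {M : Matrix m n K} (h : M.rank = Fintype.card n) : LinearMap.ker M.mulVecLin = ⊥ := by
  have := LinearMap.finrank_range_add_finrank_ker M.mulVecLin
  rw [← rank, h, Module.finrank_fintype_fun_eq_card] at this
  exact Submodule.finrank_eq_zero.mp (by omega)

variable {m n : Type*} [Fintype m] [Fintype n]

theorem det_mul_add_eq_zero_iff [DecidableEq n] {A : Matrix n m K} {B : Matrix n n K}
    (hinj : LinearMap.ker (fromCols A B)ᵀ.mulVecLin = ⊥) (Y : Matrix m n K) :
    (A * Y + B).det = 0 ↔
      ∃ x ≠ 0, Sum.elim (-x) (Yᵀ *ᵥ x) ∈ LinearMap.range (fromCols A B)ᵀ.mulVecLin := by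
  have hM (v : n → K) : (fromCols A B)ᵀ.mulVecLin v = Sum.elim (Aᵀ *ᵥ v) (Bᵀ *ᵥ v) := by
    rw [mulVecLin_apply, transpose_fromCols, fromRows_mulVec]
  have hdet (v : n → K) : (A * Y + B)ᵀ *ᵥ v = Yᵀ *ᵥ (Aᵀ *ᵥ v) + Bᵀ *ᵥ v := by
    rw [transpose_add, transpose_mul, add_mulVec, mulVec_mulVec]
  rw [← det_transpose, ← exists_mulVec_eq_zero_iff]
  constructor
  · rintro ⟨v, hv0, hv⟩
    have hB : Bᵀ *ᵥ v = Yᵀ *ᵥ -(Aᵀ *ᵥ v) := by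
      rw [mulVec_neg]
      exact eq_neg_of_add_eq_zero_right (hdet v ▸ hv)
    refine ⟨-(Aᵀ *ᵥ v), fun hA => hv0 ?_, v, by rw [hM, hB, neg_neg]⟩
    rw [hA, mulVec_zero] at hB
    rw [neg_eq_zero] at hA
    exact LinearMap.ker_eq_bot'.mp hinj v (by rw [hM, hA, hB, Sum.elim_zero_zero])
  · rintro ⟨x, hx0, u, hu⟩
    rw [hM] at hu
    have hA : Aᵀ *ᵥ u = -x := congrArg (· ∘ Sum.inl) hu
    have hB : Bᵀ *ᵥ u = Yᵀ *ᵥ x := congrArg (· ∘ Sum.inr) hu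
    refine ⟨u, fun hu0 => hx0 ?_, by rw [hdet, hA, hB, mulVec_neg, neg_add_cancel]⟩
    rwa [hu0, mulVec_zero, zero_eq_neg] at hA

theorem det_mul_transpose_sub_eq_zero_iff [DecidableEq m] (C : Matrix m m K) (D : Matrix m n K)
    (Y : Matrix m n K) :
    (D * Yᵀ - C).det = 0 ↔
      ∃ x ≠ 0, Sum.elim (-x) (Yᵀ *ᵥ x) ∈ LinearMap.ker (fromCols C D).mulVecLin := by
  simp only [← exists_mulVec_eq_zero_iff, LinearMap.mem_ker, mulVecLin_apply,
    fromCols_mulVec_sumElim, sub_mulVec, mulVec_mulVec, mulVec_neg, neg_add_eq_sub]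

end Matrix

theorem stmt_7_general (m n : ℕ) (A : Matrix (Fin n) (Fin m) ℝ) (B : Matrix (Fin n) (Fin n) ℝ)
    (hrank : (Matrix.fromCols A B).rank = n)
    (Y : Matrix (Fin m) (Fin n) ℝ)
    (C : Matrix (Fin m) (Fin m) ℝ) (D : Matrix (Fin m) (Fin n) ℝ)
    -- the columns of (C|D)ᵀ (i.e. the rows of (C|D)) form a basis of the orthogonal
    -- complement of W_{A,B}, the column span of (A|B)ᵀ
    (hspan : (Submodule.span ℝ (Set.range fun j : Fin m => (Matrix.fromCols C D) j)
        : Set ((Fin m ⊕ Fin n) → ℝ)) =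
      {v : (Fin m ⊕ Fin n) → ℝ |
        ∀ w ∈ LinearMap.range ((Matrix.fromCols A B)ᵀ.mulVecLin), v ⬝ᵥ w = 0}) :
    ((A * Y + B).det = 0 ↔ (D * Yᵀ - C).det = 0) := by
  have hinj : LinearMap.ker (fromCols A B)ᵀ.mulVecLin = ⊥ :=
    ker_mulVecLin_eq_bot_of_rank_eq_card (by rw [rank_transpose, hrank, Fintype.card_fin])
  rw [det_mul_add_eq_zero_iff hinj, det_mul_transpose_sub_eq_zero_iff,
    ker_mulVecLin_eq_of_span_row_eq (N := fromCols C D) hspan]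

theorem stmt_7 (m n : ℕ) (A : Matrix (Fin n) (Fin m) ℝ) (B : Matrix (Fin n) (Fin n) ℝ)
    (hrank : (Matrix.fromCols A B).rank = n)
    (Y : Matrix (Fin m) (Fin n) ℝ)
    (C : Matrix (Fin m) (Fin m) ℝ) (D : Matrix (Fin m) (Fin n) ℝ)
    -- the columns of (C|D)ᵀ (i.e. the rows of (C|D)) form a basis of the orthogonal
    -- complement of W_{A,B}, the column span of (A|B)ᵀ
    (hindep : LinearIndependent ℝ (fun j : Fin m => (Matrix.fromCols C D) j))
    (hspan : (Submodule.span ℝ (Set.range fun j : Fin m => (Matrix.fromCols C D) j)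
        : Set ((Fin m ⊕ Fin n) → ℝ)) =
      {v : (Fin m ⊕ Fin n) → ℝ |
        ∀ w ∈ LinearMap.range ((Matrix.fromCols A B)ᵀ.mulVecLin), v ⬝ᵥ w = 0}) :
    ((A * Y + B).det = 0 ↔ (D * Yᵀ - C).det = 0) :=
  stmt_7_general m n A B hrank Y C D hspan
end

section
/- For any A ∈ Mat_{2×2}(ℝ), B ∈ Mat_{2×2}(ℝ) with rank(A|B) = 2, there exist real numbers x, y, z such that det(A·[[x,y],[z,x]] + B) ≠ 0. -/
/-!
Write `a₁, a₂, b₁, b₂` for the columns of `(A | B)` and `[u, v]` for the minor on columns `u, v`.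
As a polynomial in `x, y, z`, `det (A * X + B)` has these minors as its coefficients, except that
the two mixed minors `[a₁, b₂]` and `[b₁, a₂]` only enter through their sum. If it vanishes
identically, five minors vanish and the Plücker relation kills the sixth. But rank 2 forces a
nonzero minor: by Lagrange's identity, twice the Gram determinant `det ((A | B) * (A | B)ᵀ) ≠ 0`
is the sum of the squares of the minors.
-/

open Matrix

section
variable {n R : Type*} [CommRing R]

def colMinor (M : Matrix (Fin 2) n R) (i j : n) : R :=
  M 0 i * M 1 j - M 1 i * M 0 j

theorem colMinor_self (M : Matrix (Fin 2) n R) (i : n) : colMinor M i i = 0 := by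
  rw [colMinor, mul_comm, sub_self]

theorem colMinor_swap (M : Matrix (Fin 2) n R) (i j : n) :
    colMinor M j i = -colMinor M i j := by
  rw [colMinor, colMinor]; ring

theorem colMinor_plucker (M : Matrix (Fin 2) n R) (i j k l : n) :
    colMinor M i j * colMinor M k l - colMinor M i k * colMinor M j l
      + colMinor M i l * colMinor M j k = 0 := by
  simp only [colMinor]; ring

theorem two_mul_det_mul_transpose_eq_sum_colMinor_sq [Fintype n] (M : Matrix (Fin 2) n R) :
    2 * (M * Mᵀ).det = ∑ i, ∑ j, colMinor M i j ^ 2 := by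
  have hterm : ∀ i j, colMinor M i j ^ 2 =
      M 0 i ^ 2 * M 1 j ^ 2 + M 1 i ^ 2 * M 0 j ^ 2 - 2 * (M 0 i * M 1 i) * (M 1 j * M 0 j) :=
    fun i j => by rw [colMinor]; ring
  simp only [hterm, Finset.sum_add_distrib, Finset.sum_sub_distrib, ← Finset.mul_sum,
    ← Finset.sum_mul, det_fin_two, mul_apply, transpose_apply, sq]
  ring
end

theorem det_mul_transpose_ne_zero_of_rank_eq_card {m n K : Type*} [Fintype m] [DecidableEq m]
    [Fintype n] [Field K] [LinearOrder K] [IsStrictOrderedRing K] (M : Matrix m n K)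
    (h : M.rank = Fintype.card m) : (M * Mᵀ).det ≠ 0 := by
  rw [← rank_self_mul_transpose] at h
  have hsurj : Function.Surjective (M * Mᵀ).mulVec := by
    rw [← Matrix.coe_mulVecLin, ← LinearMap.range_eq_top]
    exact Submodule.eq_top_of_finrank_eq (by rw [Module.finrank_fintype_fun_eq_card]; exact h)
  exact ((isUnit_iff_isUnit_det _).mp (mulVec_surjective_iff_isUnit.mp hsurj)).ne_zero

theorem exists_colMinor_ne_zero_of_rank_eq_two {n K : Type*} [Fintype n] [Field K] [LinearOrder K]
    [IsStrictOrderedRing K] (M : Matrix (Fin 2) n K) (h : M.rank = 2) :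
    ∃ i j, colMinor M i j ≠ 0 := by
  by_contra! hzero
  have hsum : ∑ i, ∑ j, colMinor M i j ^ 2 = 0 := by simp [hzero]
  refine det_mul_transpose_ne_zero_of_rank_eq_card M (by simpa using h) ?_
  simpa [hsum] using two_mul_det_mul_transpose_eq_sum_colMinor_sq M

theorem det_mul_add_eq_colMinor {R : Type*} [CommRing R] (A B : Matrix (Fin 2) (Fin 2) R)
    (x y z : R) :
    (A * !![x, y; z, x] + B).det =
      (x ^ 2 - y * z) * colMinor (fromCols A B) (.inl 0) (.inl 1)
        + x * (colMinor (fromCols A B) (.inl 0) (.inr 1)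
          + colMinor (fromCols A B) (.inr 0) (.inl 1))
        + z * colMinor (fromCols A B) (.inl 1) (.inr 1)
        - y * colMinor (fromCols A B) (.inl 0) (.inr 0)
        + colMinor (fromCols A B) (.inr 0) (.inr 1) := by
  simp only [det_fin_two, Matrix.add_apply, mul_apply, of_apply, cons_val', cons_val_zero,
    cons_val_fin_one, Fin.sum_univ_two, cons_val_one, colMinor, fromCols_apply_inl,
    fromCols_apply_inr]
  ring

theorem colMinor_fromCols_eq_zero_of_forall_det_eq_zero {R : Type*} [CommRing R]
    [NoZeroDivisors R] [NeZero (2 : R)] (A B : Matrix (Fin 2) (Fin 2) R)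
    (h : ∀ x y z : R, (A * !![x, y; z, x] + B).det = 0) (i j : Fin 2 ⊕ Fin 2) :
    colMinor (fromCols A B) i j = 0 := by
  have e x y z := (det_mul_add_eq_colMinor A B x y z).symm.trans (h x y z)
  set m := colMinor (fromCols A B)
  have hb₁b₂ : m (.inr 0) (.inr 1) = 0 := by linear_combination e 0 0 0
  have ha₂b₂ : m (.inl 1) (.inr 1) = 0 := by linear_combination e 0 0 1 - e 0 0 0
  have ha₁b₁ : m (.inl 0) (.inr 0) = 0 := by linear_combination e 0 0 0 - e 0 1 0
  have ha₁a₂ : m (.inl 0) (.inl 1) = 0 := by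
    have : 2 * m (.inl 0) (.inl 1) = 0 := by
      linear_combination e 1 0 0 + e (-1) 0 0 - 2 * e 0 0 0
    exact (mul_eq_zero.mp this).resolve_left two_ne_zero
  have hcross : m (.inl 0) (.inr 1) - m (.inl 1) (.inr 0) = 0 := by
    have : 2 * (m (.inl 0) (.inr 1) - m (.inl 1) (.inr 0)) = 0 := by
      linear_combination e 1 0 0 - e (-1) 0 0
        - 2 * colMinor_swap (fromCols A B) (.inl 1) (.inr 0)
    exact (mul_eq_zero.mp this).resolve_left two_ne_zero
  -- the Plücker relation shows that the common value of the two mixed minors squares to zero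
  have ha₁b₂ : m (.inl 0) (.inr 1) = 0 := by
    refine pow_eq_zero_iff two_ne_zero |>.mp ?_
    linear_combination colMinor_plucker (fromCols A B) (.inl 0) (.inl 1) (.inr 0) (.inr 1)
      - m (.inr 0) (.inr 1) * ha₁a₂ + m (.inl 1) (.inr 1) * ha₁b₁ + m (.inl 0) (.inr 1) * hcross
  have ha₂b₁ : m (.inl 1) (.inr 0) = 0 := by linear_combination ha₁b₂ - hcross
  rcases i with i | i <;> rcases j with j | j <;> fin_cases i <;> fin_cases j <;>
    first
    | exact colMinor_self _ _
    | assumption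
    | exact (colMinor_swap _ _ _).trans (neg_eq_zero.mpr ‹_›)

theorem stmt_8 (A B : Matrix (Fin 2) (Fin 2) ℝ)
    (hrank : (Matrix.fromCols A B).rank = 2) :
    ∃ x y z : ℝ, (A * !![x, y; z, x] + B).det ≠ 0 := by
  obtain ⟨i, j, hij⟩ := exists_colMinor_ne_zero_of_rank_eq_two _ hrank
  by_contra! hdet
  exact hij (colMinor_fromCols_eq_zero_of_forall_det_eq_zero A B hdet i j)
end
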